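/- arXiv:2401.08401 — 3 statements merged into one kernel-verified Lean document; each statement's English description precedes it below -/
import Mathlib

section
/- For distinct primes p and q, the subgroup of the multiplicative group of positive reals generated by p and q is dense in \u211d_{>0}. -/
/-!
Taking logarithms, the group `{p ^ m * q ^ n}` becomes the additive group generated by `log p`
and `log q`, which is dense in `ℝ` as soon as `log p / log q` is irrational. A rational value
`a / b` of this ratio would give `p ^ b = q ^ a`, against unique factorisation.
-/

open Real Set

theorem Nat.Prime.irrational_log_div_log {p q : ℕ} (hp : p.Prime) (hq : q.Prime) (hpq : p ≠ q) :
    Irrational (Real.log p / Real.log q) := by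
  rintro ⟨r, hr⟩
  have hp0 : (0 : ℝ) < p := by exact_mod_cast hp.pos
  have hq0 : (0 : ℝ) < q := by exact_mod_cast hq.pos
  have hlog_p : 0 < Real.log p := Real.log_pos (by exact_mod_cast hp.one_lt)
  have hlog_q : 0 < Real.log q := Real.log_pos (by exact_mod_cast hq.one_lt)
  have hr_pos : (0 : ℝ) < r := hr ▸ _root_.div_pos hlog_p hlog_q
  have hnum : 0 < r.num := Rat.num_pos.2 (by exact_mod_cast hr_pos)
  have hlog_eq : Real.log ((p : ℝ) ^ r.den) = Real.log ((q : ℝ) ^ r.num.natAbs) := by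
    have hnum_abs : ((r.num.natAbs : ℕ) : ℝ) = r.num := by
      rw [Nat.cast_natAbs, Int.cast_abs, abs_of_pos (by exact_mod_cast hnum)]
    rw [Real.log_pow, Real.log_pow, hnum_abs, (div_eq_iff hlog_q.ne').1 hr.symm, Rat.cast_def]
    field_simp
  have hpow : (p : ℝ) ^ r.den = (q : ℝ) ^ r.num.natAbs :=
    Real.log_injOn_pos (pow_pos hp0 _) (pow_pos hq0 _) hlog_eq
  exact hpq (hp.pow_inj' hq r.den_ne_zero (Int.natAbs_ne_zero.2 hnum.ne')
    (by exact_mod_cast hpow)).1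

theorem Ioi_subset_closure_zpow_mul_zpow {a b : ℝ} (ha : 0 < a) (hb : 0 < b)
    (hab : Irrational (log a / log b)) :
    Ioi 0 ⊆ closure {y : ℝ | ∃ m n : ℤ, y = a ^ m * b ^ n} := by
  have hdense : Dense (AddSubgroup.closure {log a, log b} : Set ℝ) :=
    dense_addSubgroupClosure_pair_iff.2 hab
  have hexp : exp '' (AddSubgroup.closure {log a, log b} : Set ℝ) ⊆
      {y : ℝ | ∃ m n : ℤ, y = a ^ m * b ^ n} := by
    rintro _ ⟨_, hz, rfl⟩
    obtain ⟨m, n, rfl⟩ := AddSubgroup.mem_closure_pair.1 hz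
    refine ⟨m, n, ?_⟩
    rw [zsmul_eq_mul, zsmul_eq_mul, exp_add, ← log_zpow, ← log_zpow, exp_log (zpow_pos ha m),
      exp_log (zpow_pos hb n)]
  rw [← range_exp]
  exact (continuous_exp.range_subset_closure_image_dense hdense).trans (closure_mono hexp)

theorem dense_pq_powers (p q : ℕ) (hp : p.Prime) (hq : q.Prime) (hpq : p ≠ q)
    (x : ℝ) (hx : 0 < x) :
    x ∈ closure {y : ℝ | ∃ m n : ℤ, y = (p : ℝ) ^ m * (q : ℝ) ^ n} :=
  Ioi_subset_closure_zpow_mul_zpow (by exact_mod_cast hp.pos) (by exact_mod_cast hq.pos)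
    (hp.irrational_log_div_log hq hpq) hx
end

section
/- Let p be a prime and let a \u2208 \u1e90 = \u220f_q \u2124_q be the finite adele with a_p = 0 and a_q \u2208 \u2124_q^\u00d7 for all primes q \u2260 p. Then H_a = {r \u2208 \u211a : a r \u2208 \u1e90} equals \u2124[1/p], the subring of rationals with denominator a power of p. -/
instance (p : Nat.Primes) : Fact (p : ℕ).Prime := ⟨p.2⟩

def Ha (a : ∀ p : Nat.Primes, ℚ_[p]) : Set ℚ :=
  {r : ℚ | ∀ p : Nat.Primes, ‖(r : ℚ_[p]) * a p‖ ≤ 1}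

/-! Since `a_p = 0` and `a_q` is a unit for `q ≠ p`, the condition `r ∈ H_a` only asks that `r` be a
`q`-adic integer for every prime `q ≠ p`, i.e. that no prime other than `p` divide the denominator
of `r`; so that denominator is a power of `p`. -/

namespace Padic

variable {q : ℕ} [Fact q.Prime]

theorem norm_rat_le_one_iff_not_dvd_den {r : ℚ} : ‖(r : ℚ_[q])‖ ≤ 1 ↔ ¬q ∣ r.den := by
  refine ⟨fun hr => ?_, norm_rat_le_one⟩
  have hden : ‖(r.den : ℚ_[q])‖ = 1 := by
    simpa using PadicInt.isUnit_iff.mp (PadicInt.isUnit_den r hr)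
  exact (Nat.Prime.coprime_iff_not_dvd Fact.out).mp (norm_natCast_eq_one_iff.mp hden)

theorem norm_natCast_eq_one_of_prime_ne {p : ℕ} (hp : p.Prime) (hpq : p ≠ q) :
    ‖(p : ℚ_[q])‖ = 1 :=
  norm_natCast_eq_one_iff.mpr ((Nat.coprime_primes Fact.out hp).mpr hpq.symm)

end Padic

theorem Rat.exists_eq_div_pow_iff_forall_norm_le_one (p : Nat.Primes) (r : ℚ) :
    (∃ (m : ℤ) (n : ℕ), r = (m : ℚ) / (p : ℕ) ^ n) ↔
      ∀ q : Nat.Primes, q ≠ p → ‖(r : ℚ_[q])‖ ≤ 1 := by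
  constructor
  · rintro ⟨m, n, rfl⟩ q hqp
    have hp : ‖((p : ℕ) : ℚ_[q])‖ = 1 :=
      Padic.norm_natCast_eq_one_of_prime_ne p.2 fun h =>
        hqp (Nat.Primes.coe_nat_injective h).symm
    push_cast
    rw [norm_div, norm_pow, hp, one_pow, div_one]
    exact Padic.norm_int_le_one m
  · intro hr
    have hden : r.den = (p : ℕ) ^ r.den.primeFactorsList.length := by
      refine Nat.eq_prime_pow_of_unique_prime_dvd r.den_nz fun {d} hd hdvd => ?_
      by_contra hdp
      have : Fact d.Prime := ⟨hd⟩
      exact Padic.norm_rat_le_one_iff_not_dvd_den.mp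
        (hr ⟨d, hd⟩ fun h => hdp (congrArg Subtype.val h)) hdvd
    refine ⟨r.num, r.den.primeFactorsList.length, ?_⟩
    rw [← Nat.cast_pow, ← hden, Rat.num_div_den]

theorem mem_Ha_iff_forall_norm_le_one {p : Nat.Primes} {a : ∀ q : Nat.Primes, ℚ_[q]}
    (hap : a p = 0) (haq : ∀ q : Nat.Primes, q ≠ p → ‖a q‖ = 1) (r : ℚ) :
    r ∈ Ha a ↔ ∀ q : Nat.Primes, q ≠ p → ‖(r : ℚ_[q])‖ ≤ 1 := by
  refine forall_congr' fun q => ?_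
  by_cases hqp : q = p
  · subst hqp
    simp [hap]
  · simp [norm_mul, haq q hqp, hqp]

theorem Ha_eq_Z_inv_p (p : Nat.Primes) (a : ∀ q : Nat.Primes, ℚ_[q])
    (hap : a p = 0) (haq : ∀ q : Nat.Primes, q ≠ p → ‖a q‖ = 1) :
    Ha a = {r : ℚ | ∃ (m : ℤ) (n : ℕ), r = (m : ℚ) / (p : ℕ) ^ n} := by
  ext r
  rw [mem_Ha_iff_forall_norm_le_one hap haq, Set.mem_ofPred_eq,
    Rat.exists_eq_div_pow_iff_forall_norm_le_one]
end

section
/- For distinct primes p and q, the additive groups \u2124[1/p] and \u2124[1/q] are not isomorphic as abstract groups. -/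
/-! Multiplication by `p` is surjective on `ℤ[1/p]`, a property preserved by group isomorphisms.
It fails on `ℤ[1/q]`: a `p`-th part of `1` there would be `1/p`, and `q ^ k / p ∈ ℤ` forces
`p ∣ q`. -/

theorem exists_pow_mul_eq_intCast_of_mem_closure_inv {K : Type*} [Field K] {a : ℕ} {x : K}
    (ha : (a : K) ≠ 0) (hx : x ∈ Subring.closure ({(a : K)⁻¹} : Set K)) :
    ∃ (k : ℕ) (m : ℤ), (a : K) ^ k * x = m := by
  induction hx using Subring.closure_induction with
  | mem y hy =>
      rcases hy with rfl
      exact ⟨1, 1, by simp [ha]⟩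
  | zero => exact ⟨0, 0, by simp⟩
  | one => exact ⟨0, 1, by simp⟩
  | add x y _ _ hx hy =>
      obtain ⟨k, m, hm⟩ := hx
      obtain ⟨l, n, hn⟩ := hy
      exact ⟨k + l, m * a ^ l + n * a ^ k, by
        push_cast; linear_combination (a : K) ^ l * hm + (a : K) ^ k * hn⟩
  | neg x _ hx =>
      obtain ⟨k, m, hm⟩ := hx
      exact ⟨k, -m, by push_cast; linear_combination -hm⟩
  | mul x y _ _ hx hy =>
      obtain ⟨k, m, hm⟩ := hx
      obtain ⟨l, n, hn⟩ := hy
      exact ⟨k + l, m * n, by push_cast; linear_combination ((a : K) ^ l * y) * hm + m * hn⟩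

theorem exists_nsmul_eq_of_mem_closure_inv {K : Type*} [Field K] {n : ℕ} (hn : (n : K) ≠ 0)
    (x : Subring.closure ({(n : K)⁻¹} : Set K)) : ∃ y, n • y = x :=
  ⟨⟨(n : K)⁻¹ * x, mul_mem (Subring.subset_closure rfl) x.2⟩,
    Subtype.ext (by simp [nsmul_eq_mul, hn])⟩

theorem exists_dvd_pow_of_inv_mem_closure_inv {p q : ℕ} (hp : p ≠ 0) (hq : q ≠ 0)
    (h : (p : ℚ)⁻¹ ∈ Subring.closure ({(q : ℚ)⁻¹} : Set ℚ)) : ∃ k, p ∣ q ^ k := by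
  obtain ⟨k, m, hm⟩ := exists_pow_mul_eq_intCast_of_mem_closure_inv (by exact_mod_cast hq) h
  rw [mul_inv_eq_iff_eq_mul₀ (by exact_mod_cast hp)] at hm
  exact ⟨k, Int.natCast_dvd_natCast.mp ⟨m, by rw [mul_comm]; exact_mod_cast hm⟩⟩

theorem Z_inv_p_not_addEquiv_Z_inv_q (p q : ℕ) (hp : p.Prime) (hq : q.Prime) (hpq : p ≠ q) :
    ¬ Nonempty ((Subring.closure ({(p : ℚ)⁻¹} : Set ℚ)) ≃+
      (Subring.closure ({(q : ℚ)⁻¹} : Set ℚ))) := by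
  rintro ⟨e⟩
  obtain ⟨y, hy⟩ := exists_nsmul_eq_of_mem_closure_inv (by exact_mod_cast hp.ne_zero) (e.symm 1)
  have hpy : p • e y = 1 := by rw [← map_nsmul, hy, e.apply_symm_apply]
  have hey : (e y : ℚ) = (p : ℚ)⁻¹ :=
    eq_inv_of_mul_eq_one_right (by simpa [nsmul_eq_mul] using congrArg Subtype.val hpy)
  obtain ⟨k, hk⟩ := exists_dvd_pow_of_inv_mem_closure_inv hp.ne_zero hq.ne_zero (hey ▸ (e y).2)
  exact hpq ((Nat.prime_dvd_prime_iff_eq hp hq).mp (hp.dvd_of_dvd_pow hk))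
end
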